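/- arXiv:2112.14125 — 3 statements merged into one kernel-verified Lean document; each statement's English description precedes it below -/
import Mathlib

section
/- Let f(β) = log₂(1 + aβ) with a > 0 and t(β) = exp(-β/(12(1-β))) on (0,1). Then the product g(β) = f(β)t(β) is strictly concave on the interval (0, 23/24), i.e., g''(β) < 0 there. -/
theorem product_strict_concave (a : ℝ) (ha : 0 < a) :
    let f : ℝ → ℝ := fun β => Real.logb 2 (1 + a * β)
    let t : ℝ → ℝ := fun β => Real.exp (-β / (12 * (1 - β)))
    StrictConcaveOn ℝ (Set.Ioo (0 : ℝ) (23 / 24)) (fun β => f β * t β) ∧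
    ∀ β ∈ Set.Ioo (0 : ℝ) (23 / 24),
      deriv (deriv (fun b => f b * t b)) β < 0 := by
  intro f t
  have hL0 : 0 < Real.log 2 := Real.log_pos (by norm_num)
  set L := Real.log 2 with hLdef
  -- linear part
  have hlin : ∀ β : ℝ, HasDerivAt (fun b => 1 + a * b) a β := by
    intro β
    simpa using ((hasDerivAt_id β).const_mul a).const_add 1
  -- derivative of f
  have hf' : ∀ β : ℝ, 0 < 1 + a * β →
      HasDerivAt f (a / ((1 + a * β) * L)) β := by
    intro β hx
    have hlog : HasDerivAt (fun b => Real.log (1 + a * b)) (a / (1 + a * β)) β := by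
      have := (Real.hasDerivAt_log hx.ne').comp β (hlin β)
      simpa [div_eq_mul_inv, mul_comm, Function.comp_def] using this
    have : HasDerivAt (fun b => Real.log (1 + a * b) / L) (a / (1 + a * β) / L) β :=
      hlog.div_const L
    have heq : f = fun b => Real.log (1 + a * b) / L := by
      funext b; simp [f, Real.logb, hLdef]
    rw [heq]
    convert this using 1
    field_simp
  -- derivative of t
  have ht' : ∀ β : ℝ, β ≠ 1 →
      HasDerivAt t (t β * (-1 / (12 * (1 - β) ^ 2))) β := by
    intro β hβ
    have hd : (12 * (1 - β)) ≠ 0 := by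
      intro h
      apply hβ
      have : (1 : ℝ) - β = 0 := by linarith [mul_eq_zero.mp h]
      linarith
    have h1 : (1 : ℝ) - β ≠ 0 := fun h => hβ (by linarith)
    have hnum : HasDerivAt (fun b : ℝ => -b) (-1 : ℝ) β := by
      simpa using (hasDerivAt_id' β).fun_neg
    have hden : HasDerivAt (fun b : ℝ => 12 * (1 - b)) (-12 : ℝ) β := by
      simpa using ((hasDerivAt_id β).const_sub 1).const_mul 12
    have hu : HasDerivAt (fun b : ℝ => -b / (12 * (1 - b)))
        ((-1 * (12 * (1 - β)) - -β * -12) / (12 * (1 - β)) ^ 2) β :=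
      hnum.div hden hd
    have hu' : HasDerivAt (fun b : ℝ => -b / (12 * (1 - b)))
        (-1 / (12 * (1 - β) ^ 2)) β := by
      convert hu using 1
      field_simp
      ring
    simpa [t, mul_comm] using hu'.exp
  refine ?_
  -- first derivative of the product
  set G : ℝ → ℝ := fun β => (a / ((1 + a * β) * L)) * t β +
      f β * (t β * (-1 / (12 * (1 - β) ^ 2))) with hGdef
  have hmem : ∀ β ∈ Set.Ioo (0 : ℝ) (23 / 24), 0 < 1 + a * β ∧ β ≠ 1 ∧ 0 < 1 - β := by
    rintro β ⟨h0, h1⟩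
    refine ⟨by nlinarith, by intro h; rw [h] at h1; norm_num at h1, by linarith⟩
  have hG : ∀ β ∈ Set.Ioo (0 : ℝ) (23 / 24),
      HasDerivAt (fun b => f b * t b) (G β) β := by
    intro β hβ
    obtain ⟨hx, hβ1, _⟩ := hmem β hβ
    exact (hf' β hx).mul (ht' β hβ1)
  -- second derivative value
  have hG' : ∀ β ∈ Set.Ioo (0 : ℝ) (23 / 24),
      HasDerivAt G
        ((-(a ^ 2) / ((1 + a * β) ^ 2 * L)) * t β
          + 2 * ((a / ((1 + a * β) * L)) * (t β * (-1 / (12 * (1 - β) ^ 2))))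
          + f β * (t β * (1 / (144 * (1 - β) ^ 4) - 1 / (6 * (1 - β) ^ 3)))) β := by
    intro β hβ
    obtain ⟨hx, hβ1, hy⟩ := hmem β hβ
    have hxne : (1 + a * β) ≠ 0 := hx.ne'
    have hyne : (1 : ℝ) - β ≠ 0 := hy.ne'
    have hdenne : ((1 + a * β) * L) ≠ 0 := mul_ne_zero hxne hL0.ne'
    -- derivative of A
    have hA : HasDerivAt (fun b => a / ((1 + a * b) * L))
        (-(a ^ 2) / ((1 + a * β) ^ 2 * L)) β := by
      have hden : HasDerivAt (fun b => (1 + a * b) * L) (a * L) β := (hlin β).mul_const L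
      have := (hasDerivAt_const β a).fun_div hden hdenne
      refine this.congr_deriv ?_
      field_simp
      ring
    -- derivative of c
    have hc : HasDerivAt (fun b : ℝ => -1 / (12 * (1 - b) ^ 2))
        (-1 / (6 * (1 - β) ^ 3)) β := by
      have hden : HasDerivAt (fun b : ℝ => 12 * (1 - b) ^ 2)
          (12 * (2 * (1 - β) ^ 1 * -1)) β := by
        exact (((hasDerivAt_id β).const_sub 1).pow 2).const_mul 12
      have hdne : (12 * (1 - β) ^ 2) ≠ 0 := by positivity
      have := (hasDerivAt_const β (-1 : ℝ)).fun_div hden hdne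
      refine this.congr_deriv ?_
      field_simp
      ring
    have hB : HasDerivAt (fun b => t b * (-1 / (12 * (1 - b) ^ 2)))
        (t β * (-1 / (12 * (1 - β) ^ 2)) * (-1 / (12 * (1 - β) ^ 2))
          + t β * (-1 / (6 * (1 - β) ^ 3))) β :=
      (ht' β hβ1).mul hc
    have := (hA.fun_mul (ht' β hβ1)).fun_add ((hf' β hx).fun_mul hB)
    refine this.congr_deriv ?_
    field_simp
    ring
  -- deriv deriv equality and negativity
  have hderiv2 : ∀ β ∈ Set.Ioo (0 : ℝ) (23 / 24),
      deriv (deriv (fun b => f b * t b)) β < 0 := by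
    intro β hβ
    obtain ⟨hx, hβ1, hy⟩ := hmem β hβ
    have hEq : deriv (fun b => f b * t b) =ᶠ[nhds β] G :=
      Filter.eventuallyEq_of_mem (isOpen_Ioo.mem_nhds hβ)
        (fun x hx => (hG x hx).deriv)
    rw [hEq.deriv_eq, (hG' β hβ).deriv]
    -- negativity
    have htpos : 0 < t β := Real.exp_pos _
    have hfpos : 0 < f β := Real.logb_pos (by norm_num) (by nlinarith [hβ.1])
    have h1 : (-(a ^ 2) / ((1 + a * β) ^ 2 * L)) * t β < 0 := by
      apply mul_neg_of_neg_of_pos _ htpos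
      apply div_neg_of_neg_of_pos (by nlinarith) (by positivity)
    have h2 : 2 * ((a / ((1 + a * β) * L)) * (t β * (-1 / (12 * (1 - β) ^ 2)))) < 0 := by
      have hApos : 0 < a / ((1 + a * β) * L) := by positivity
      have hcneg : (-1 / (12 * (1 - β) ^ 2)) < 0 := by
        apply div_neg_of_neg_of_pos (by norm_num) (by positivity)
      have := mul_neg_of_pos_of_neg hApos (mul_neg_of_pos_of_neg htpos hcneg)
      linarith
    have h3 : f β * (t β * (1 / (144 * (1 - β) ^ 4) - 1 / (6 * (1 - β) ^ 3))) < 0 := by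
      have hsub : 1 / (144 * (1 - β) ^ 4) - 1 / (6 * (1 - β) ^ 3) < 0 := by
        have hlt : (6 * (1 - β) ^ 3) < 144 * (1 - β) ^ 4 := by
          have h24 : (1 : ℝ) / 24 < 1 - β := by
            have := hβ.2; linarith
          nlinarith [pow_pos hy 3]
        have := one_div_lt_one_div_of_lt (by positivity : (0:ℝ) < 6 * (1 - β) ^ 3) hlt
        linarith
      have := mul_neg_of_pos_of_neg hfpos (mul_neg_of_pos_of_neg htpos hsub)
      linarith
    linarith
  refine ⟨?_, hderiv2⟩
  apply strictConcaveOn_of_deriv2_neg (convex_Ioo _ _)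
  · intro x hx
    exact ((hG x hx).differentiableAt.continuousAt).continuousWithinAt
  · intro x hx
    rw [interior_Ioo] at hx
    have := hderiv2 x hx
    simpa [Function.iterate_succ, Function.comp] using this
end

section
/- Let f(β) = log₂(1 + aβ) with a > 0 and t(β) = exp(-β/(12(1-β))). Then the product f(β)t(β) is strictly decreasing on the interval [23/24, 1). -/
theorem product_strict_anti (a : ℝ) (ha : 0 < a) :
    StrictAntiOn
      (fun β : ℝ => Real.logb 2 (1 + a * β) * Real.exp (-β / (12 * (1 - β))))
      (Set.Ico (23 / 24 : ℝ) 1) := by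
  have h2 : (0:ℝ) < Real.log 2 := Real.log_pos (by norm_num)
  apply strictAntiOn_of_deriv_neg (convex_Ico _ _)
  · simp only [Real.logb]
    apply ContinuousOn.mul
    · apply ContinuousOn.div_const
      apply ContinuousOn.log (by fun_prop)
      intro x hx
      have h1 := hx.1
      nlinarith [hx.1, hx.2]
    · apply Real.continuous_exp.comp_continuousOn
      apply ContinuousOn.div (by fun_prop) (by fun_prop)
      intro x hx
      have := hx.2
      intro h
      nlinarith
  · intro β hβ
    rw [interior_Ico] at hβ
    obtain ⟨hb1, hb2⟩ := hβ
    have hβpos : 0 < β := by linarith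
    have hA : (0:ℝ) < 1 + a * β := by positivity
    have hD : (0:ℝ) < 1 - β := by linarith
    have hS : (0:ℝ) < 12 * (1 - β)^2 := by positivity
    -- derivative of logb part
    have hu : HasDerivAt (fun x : ℝ => Real.logb 2 (1 + a * x))
        (a / ((1 + a * β) * Real.log 2)) β := by
      have hlin : HasDerivAt (fun x : ℝ => 1 + a * x) a β := by
        simpa using ((hasDerivAt_id β).const_mul a).const_add 1
      have hlog : HasDerivAt (fun x : ℝ => Real.log (1 + a * x)) (a / (1 + a * β)) β := by
        have := (Real.hasDerivAt_log hA.ne').comp β hlin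
        exact this.congr_deriv (by ring)
      have := hlog.div_const (Real.log 2)
      simp only [Real.logb]
      exact this.congr_deriv (by rw [div_div])
    -- derivative of exponent
    have hg : HasDerivAt (fun x : ℝ => -x / (12 * (1 - x)))
        (-1 / (12 * (1 - β)^2)) β := by
      have hnum : HasDerivAt (fun x : ℝ => -x) (-1) β := (hasDerivAt_id β).neg
      have hden : HasDerivAt (fun x : ℝ => 12 * (1 - x)) (-12) β := by
        simpa using (((hasDerivAt_id β).const_sub 1).const_mul 12)
      have := hnum.div hden (by positivity)
      refine this.congr_deriv ?_
      rw [div_eq_div_iff (pow_pos (by linarith) 2).ne' hS.ne']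
      ring
    have hexp : HasDerivAt (fun x : ℝ => Real.exp (-x / (12 * (1 - x))))
        (Real.exp (-β / (12 * (1 - β))) * (-1 / (12 * (1 - β)^2))) β := hg.exp
    have hF := hu.mul hexp
    rw [show (fun β : ℝ => Real.logb 2 (1 + a * β) * Real.exp (-β / (12 * (1 - β)))) = ((fun x => Real.logb 2 (1 + a * x)) * fun x => Real.exp (-x / (12 * (1 - x)))) from rfl, hF.deriv]
    -- key log inequality : log(1+x) ≥ x/(1+x)
    have hlogkey : a * β / (1 + a * β) ≤ Real.log (1 + a * β) := by
      have h := Real.log_le_sub_one_of_pos (x := (1 + a*β)⁻¹) (by positivity)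
      rw [Real.log_inv] at h
      have h' : (1 + a*β)⁻¹ - 1 = -(a*β/(1+a*β)) := by field_simp; ring
      rw [h'] at h
      linarith
    have hL : 0 < Real.log (1 + a * β) := Real.log_pos (by nlinarith)
    have hEpos : 0 < Real.exp (-β / (12 * (1 - β))) := Real.exp_pos _
    set E := Real.exp (-β / (12 * (1 - β))) with hE
    set L := Real.log (1 + a * β) with hLdef
    -- main inequality: a * 12(1-β)² < L * (1+aβ)
    have hkey : a * (12 * (1 - β)^2) < L * (1 + a * β) := by
      have h12 : 12 * (1 - β)^2 < β := by nlinarith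
      have : a * β ≤ L * (1 + a * β) := by
        rw [div_le_iff₀ hA] at hlogkey
        linarith
      nlinarith
    have hbracket : a / ((1 + a * β) * Real.log 2) + L / Real.log 2 * (-1 / (12 * (1 - β)^2)) < 0 := by
      have hlt : a / ((1 + a * β) * Real.log 2) < L / Real.log 2 * (1 / (12 * (1 - β)^2)) := by
        rw [div_mul_eq_mul_div, mul_one_div, div_div, div_lt_div_iff₀ (by positivity) (by positivity)]
        nlinarith
      have heq : L / Real.log 2 * (-1 / (12 * (1 - β)^2))
          = -(L / Real.log 2 * (1 / (12 * (1 - β)^2))) := by ring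
      rw [heq]
      linarith
    have : a / ((1 + a * β) * Real.log 2) * E + Real.logb 2 (1 + a * β) * (E * (-1 / (12 * (1 - β)^2)))
        = E * (a / ((1 + a * β) * Real.log 2) + L / Real.log 2 * (-1 / (12 * (1 - β)^2))) := by
      simp only [Real.logb, hLdef]
      ring
    rw [this]
    exact mul_neg_of_pos_of_neg hEpos hbracket
end

section
/- The function c ↦ log₂(1 + ((1-c)/2)² β² ρ² / (9 + 6((1-c)/2)βρ)) is strictly decreasing in c on [0, 1], for any fixed β ∈ (0,1) and ρ > 0. -/
theorem mutual_info_decreasing_in_LOS (β ρ : ℝ) (hβ0 : 0 < β) (hβ1 : β < 1) (hρ : 0 < ρ) :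
    StrictAntiOn (fun c : ℝ =>
      Real.logb 2 (1 + ((1 - c) / 2) ^ 2 * β ^ 2 * ρ ^ 2 /
        (9 + 6 * ((1 - c) / 2) * β * ρ)))
      (Set.Icc 0 1) := by
  intro x hx y hy hxy
  obtain ⟨hx0, hx1⟩ := hx
  obtain ⟨hy0, hy1⟩ := hy
  set a := (1 - y) / 2 with ha_def
  set b := (1 - x) / 2 with hb_def
  have hk : 0 < β * ρ := mul_pos hβ0 hρ
  have ha0 : 0 ≤ a := by simp [ha_def]; linarith
  have hab : a < b := by simp [ha_def, hb_def]; linarith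
  have hda : 0 < 9 + 6 * a * β * ρ := by nlinarith
  have hdb : 0 < 9 + 6 * b * β * ρ := by nlinarith
  simp only
  apply Real.logb_lt_logb one_lt_two
  · positivity
  · have hgoal : a ^ 2 * β ^ 2 * ρ ^ 2 / (9 + 6 * a * β * ρ) <
        b ^ 2 * β ^ 2 * ρ ^ 2 / (9 + 6 * b * β * ρ) := by
      rw [div_lt_div_iff₀ hda hdb]
      nlinarith [mul_pos (mul_pos (sub_pos.mpr hab) (show (0:ℝ) < a + b by linarith)) (mul_pos hk hk), mul_nonneg (mul_nonneg (mul_nonneg ha0 (sub_pos.mpr hab).le) hk.le) (mul_pos hk hk).le]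
    linarith
end
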